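/- arXiv:2406.02514 — 4 statements merged into one kernel-verified Lean document; each statement's English description precedes it below -/
import Mathlib

section
/- Let d, n > 0 and let 0 < γ < 1 satisfy γ·d ≥ 1. Let G be a bipartite graph whose two vertex classes each have size (1±γ)n and in which every vertex v satisfies d_G(v) = (1±γ)d. Then G contains at least (1−10√γ)d pairwise edge-disjoint matchings, each of size at least (1−10√γ)n. -/
open SimpleGraph Finset
open scoped Classical symmDiff

noncomputable section

/-- A path in a graph `G`, recorded together with its two endvertices. -/
structure GraphPath {V : Type} (G : SimpleGraph V) where
  a : V
  b : V
  walk : G.Walk a b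
  isPath : walk.IsPath

namespace GraphPath

variable {V : Type} {G : SimpleGraph V}

/-- The edges of a path, as a finset. -/
def edgeFinset (P : GraphPath G) : Finset (Sym2 V) :=
  P.walk.edges.toFinset

/-- The vertices of a path, as a finset. -/
def vertexFinset (P : GraphPath G) : Finset V :=
  P.walk.support.toFinset

/-- `v` is an endvertex of the path `P`. -/
def IsEndvertex (P : GraphPath G) (v : V) : Prop :=
  v = P.a ∨ v = P.b

end GraphPath

/-- The set of edges used by a list of paths. -/
def pathListEdges {V : Type} {G : SimpleGraph V} (l : List (GraphPath G)) : Finset (Sym2 V) :=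
  l.foldr (fun P s => P.edgeFinset ∪ s) ∅

/-- A list of paths is pairwise edge-disjoint. -/
def EdgeDisjointPaths {V : Type} {G : SimpleGraph V} (l : List (GraphPath G)) : Prop :=
  l.Pairwise fun P Q => Disjoint P.edgeFinset Q.edgeFinset

/-- A path forest in `G`: a collection of pairwise vertex-disjoint paths
(equivalently, a subgraph each of whose connected components is a path). -/
structure PathForest {V : Type} (G : SimpleGraph V) where
  paths : List (GraphPath G)
  vertexDisjoint : paths.Pairwise fun P Q => ∀ v, v ∈ P.walk.support → v ∉ Q.walk.support

namespace PathForest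

variable {V : Type} {G : SimpleGraph V}

/-- The edges of a path forest. -/
def edgeFinset (F : PathForest G) : Finset (Sym2 V) :=
  pathListEdges F.paths

/-- The vertices of a path forest. -/
def vertexFinset (F : PathForest G) : Finset V :=
  F.paths.foldr (fun P s => P.vertexFinset ∪ s) ∅

/-- The number of paths of `F` having `v` as an endvertex. -/
def endCount (F : PathForest G) (v : V) : ℕ :=
  F.paths.countP fun P => decide (P.IsEndvertex v)

end PathForest

/-- A family of path forests is pairwise edge-disjoint. -/
def PairwiseEdgeDisjoint {V : Type} {G : SimpleGraph V} {k : ℕ}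
    (Ps : Fin k → PathForest G) : Prop :=
  ∀ i j, i ≠ j → Disjoint (Ps i).edgeFinset (Ps j).edgeFinset

/-- An `(m, Δ₀, Δ₁)`-bounded family of path forests: each forest has at most `m` paths, each
vertex is an endvertex of at most `Δ₀` paths in total, and, for each forest, each vertex has at
most `Δ₁` neighbours among the endvertices of the paths of the forest. -/
def BoundedFamily {V : Type} [Fintype V] {G : SimpleGraph V} {k : ℕ}
    (Ps : Fin k → PathForest G) (m Δ₀ Δ₁ : ℝ) : Prop :=
  (∀ i, (((Ps i).paths.length : ℕ) : ℝ) ≤ m) ∧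
  (∀ v : V, ((∑ i, (Ps i).endCount v : ℕ) : ℝ) ≤ Δ₀) ∧
  (∀ i, ∀ v : V,
    (((Finset.univ.filter fun u =>
        G.Adj v u ∧ ∃ P ∈ (Ps i).paths, P.IsEndvertex u).card : ℕ) : ℝ) ≤ Δ₁)

/-- The degree of `v` into the vertex set `X`, i.e. `d_G(v,X) = |N_G(v) ∩ X|`. -/
def degIn {V : Type} [Fintype V] (G : SimpleGraph V) (v : V) (X : Finset V) : ℕ :=
  (G.neighborFinset v ∩ X).card

/-- A graph on a finite vertex type is `(η,d,K)`-dense if it has a positive number of vertices,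
at most `K·d` vertices, and every vertex has degree at least `(1−η)d`. -/
def IsDenseGraph {V : Type} [Fintype V] (G : SimpleGraph V) (η d K : ℝ) : Prop :=
  0 < Fintype.card V ∧ (Fintype.card V : ℝ) ≤ K * d ∧
    ∀ v : V, (1 - η) * d ≤ (G.degree v : ℝ)

/-- A subgraph `H` of `G` is `(η,d,K)`-dense if `0 < |V(H)| ≤ K·d` and every vertex of `H`
has degree at least `(1−η)d` in `H`. -/
def IsDenseSubgraph {V : Type} {G : SimpleGraph V} (H : G.Subgraph) (η d K : ℝ) : Prop :=
  H.verts.Nonempty ∧ (H.verts.ncard : ℝ) ≤ K * d ∧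
    ∀ v ∈ H.verts, (1 - η) * d ≤ ((H.neighborSet v).ncard : ℝ)

/-- A graph is `(ζ,λ,d)`-connected if for all vertex sets `A`, `B` of size at least `ζ·d`
and every set `F` of at most `λ·d²` edges, there is a path between `A` and `B` in `G − F`. -/
def WellConnected {V : Type} (G : SimpleGraph V) (ζ lam d : ℝ) : Prop :=
  ∀ A B : Set V, ζ * d ≤ (A.ncard : ℝ) → ζ * d ≤ (B.ncard : ℝ) →
    ∀ F : Set (Sym2 V), F ⊆ G.edgeSet → ((F.ncard : ℝ) ≤ lam * d ^ 2) →
      ∃ a ∈ A, ∃ b ∈ B, ∃ p : (G.deleteEdges F).Walk a b, p.IsPath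

/-! A bipartite graph of maximum degree `D` has a proper `D`-edge-colouring (König): complete its
biadjacency matrix to a nonnegative integer matrix all of whose line sums are `D`, and peel off `D`
injections one at a time with Hall's theorem. The colour classes are `D ≈ (1+γ)d` edge-disjoint
matchings partitioning the at least `(1-γ)²nd` edges, and each has at most `|A| ≤ (1+γ)n` edges, so
averaging shows that at least `(1-10√γ)d` of them have at least `(1-10√γ)n` edges. -/

section NatMatrix

variable {ι κ : Type*} [Fintype ι] [Fintype κ]

theorem exists_nat_matrix_with_margins (r : ι → ℕ) (c : κ → ℕ) (h : ∑ i, r i = ∑ j, c j) :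
    ∃ f : ι → κ → ℕ, (∀ i, ∑ j, f i j = r i) ∧ ∀ j, ∑ i, f i j = c j := by
  obtain ⟨S, hS⟩ : ∃ S, ∑ i, r i = S := ⟨_, rfl⟩
  induction S generalizing r c with
  | zero =>
    have hr := sum_eq_zero_iff.1 hS
    have hc := sum_eq_zero_iff.1 (h ▸ hS)
    exact ⟨0, fun i => by simp [hr i (mem_univ i)], fun j => by simp [hc j (mem_univ j)]⟩
  | succ S ih =>
    obtain ⟨i₀, hi₀⟩ : ∃ i, r i ≠ 0 := by
      by_contra! h0
      simp [h0] at hS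
    obtain ⟨j₀, hj₀⟩ : ∃ j, c j ≠ 0 := by
      by_contra! h0
      simp [h0, h] at hS
    set er : ι → ℕ := Pi.single i₀ 1
    set ec : κ → ℕ := Pi.single j₀ 1
    have her : ∀ i, er i ≤ r i := fun i => by
      by_cases hi : i = i₀ <;> simp [er, hi, Nat.one_le_iff_ne_zero.2 hi₀]
    have hec : ∀ j, ec j ≤ c j := fun j => by
      by_cases hj : j = j₀ <;> simp [ec, hj, Nat.one_le_iff_ne_zero.2 hj₀]
    have hrS : ∑ i, (r - er) i = S := by
      simp [sum_tsub_distrib univ fun i _ => her i, er, hS]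
    have hcS : ∑ j, (c - ec) j = S := by
      simp [sum_tsub_distrib univ fun j _ => hec j, ec, ← h, hS]
    obtain ⟨f, hfr, hfc⟩ := ih (r - er) (c - ec) (hrS.trans hcS.symm) hrS
    refine ⟨fun i j => f i j + er i * ec j, fun i => ?_, fun j => ?_⟩
    · simp [sum_add_distrib, hfr, ← mul_sum, ec, Nat.sub_add_cancel (her i)]
    · simp [sum_add_distrib, hfc, ← sum_mul, er, Nat.sub_add_cancel (hec j)]

theorem exists_le_regular_of_sum_le (T : ι → ι → ℕ) {D : ℕ}
    (hrow : ∀ i, ∑ j, T i j ≤ D) (hcol : ∀ j, ∑ i, T i j ≤ D) :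
    ∃ T' : ι → ι → ℕ, T ≤ T' ∧ (∀ i, ∑ j, T' i j = D) ∧ ∀ j, ∑ i, T' i j = D := by
  have hmargins : ∑ i, (D - ∑ j, T i j) = ∑ j, (D - ∑ i, T i j) := by
    rw [sum_tsub_distrib univ fun i _ => hrow i, sum_tsub_distrib univ fun j _ => hcol j,
      sum_comm]
  obtain ⟨F, hFr, hFc⟩ := exists_nat_matrix_with_margins _ _ hmargins
  refine ⟨T + F, fun i j => Nat.le_add_right _ _, fun i => ?_, fun j => ?_⟩
  · simp only [Pi.add_apply, sum_add_distrib, hFr]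
    exact Nat.add_sub_cancel' (hrow i)
  · simp only [Pi.add_apply, sum_add_distrib, hFc]
    exact Nat.add_sub_cancel' (hcol j)

theorem exists_injective_forall_pos_of_regular (T : ι → ι → ℕ) {k : ℕ} (hk : 0 < k)
    (hrow : ∀ i, ∑ j, T i j = k) (hcol : ∀ j, ∑ i, T i j = k) :
    ∃ f : ι → ι, Function.Injective f ∧ ∀ i, 0 < T i (f i) := by
  obtain ⟨f, hf, hpos⟩ := (all_card_le_biUnion_card_iff_exists_injective
    fun i => ({j | 0 < T i j} : Finset ι)).1 fun s => by
      set N := s.biUnion fun i => ({j | 0 < T i j} : Finset ι)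
      have hrowN : ∀ i ∈ s, ∑ j ∈ N, T i j = k := fun i hi => by
        rw [← hrow i]
        refine sum_subset (subset_univ _) fun j _ hj => ?_
        by_contra hT
        exact hj (mem_biUnion.2 ⟨i, hi, mem_filter.2 ⟨mem_univ j, Nat.pos_of_ne_zero hT⟩⟩)
      refine Nat.le_of_mul_le_mul_left ?_ hk
      calc k * #s = ∑ i ∈ s, ∑ j ∈ N, T i j := by rw [sum_congr rfl hrowN]; simp [mul_comm]
        _ = ∑ j ∈ N, ∑ i ∈ s, T i j := sum_comm
        _ ≤ ∑ j ∈ N, k := sum_le_sum fun j _ => hcol j ▸ sum_le_sum_of_subset (subset_univ s)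
        _ = k * #N := by simp [mul_comm]
  exact ⟨f, hf, fun i => (mem_filter.1 (hpos i)).2⟩

theorem exists_injective_cover_of_regular (T : ι → ι → ℕ) (k : ℕ)
    (hrow : ∀ i, ∑ j, T i j = k) (hcol : ∀ j, ∑ i, T i j = k) :
    ∃ σ : Fin k → ι → ι, (∀ t, Function.Injective (σ t)) ∧
      ∀ i j, 0 < T i j → ∃ t, σ t i = j := by
  induction k generalizing T with
  | zero =>
    refine ⟨Fin.elim0, fun t => t.elim0, fun i j hij => ?_⟩
    exact absurd (sum_eq_zero_iff.1 (hrow i) j (mem_univ j)) hij.ne'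
  | succ k ih =>
    obtain ⟨f, hf, hpos⟩ := exists_injective_forall_pos_of_regular T k.succ_pos hrow hcol
    set P : ι → ι → ℕ := fun i j => if f i = j then 1 else 0
    have hPT : ∀ i j, P i j ≤ T i j := fun i j => by
      by_cases h : f i = j
      · simpa [P, h, Nat.one_le_iff_ne_zero, Nat.pos_iff_ne_zero] using hpos i
      · simp [P, h]
    have hProw : ∀ i, ∑ j, P i j = 1 := by simp [P]
    have hPcol : ∀ j, ∑ i, P i j = 1 := fun j => by
      obtain ⟨i₀, rfl⟩ := Finite.surjective_of_injective hf j
      simp [P, hf.eq_iff]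
    obtain ⟨σ, hσ, hcover⟩ := ih (T - P)
      (fun i => by simp [sum_tsub_distrib univ fun j _ => hPT i j, hrow i, hProw i])
      (fun j => by simp [sum_tsub_distrib univ fun i _ => hPT i j, hcol j, hPcol j])
    refine ⟨Fin.cons f σ, Fin.cases hf hσ, fun i j hij => ?_⟩
    by_cases hfi : f i = j
    · exact ⟨0, hfi⟩
    · obtain ⟨t, ht⟩ := hcover i j (by simpa [P, hfi] using hij)
      exact ⟨t.succ, ht⟩

end NatMatrix

namespace SimpleGraph

variable {V : Type*} {G : SimpleGraph V}

theorem IsBipartiteWith.isVertexCover {s t : Set V} (h : G.IsBipartiteWith s t) :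
    G.IsVertexCover s :=
  fun _ _ hvw => (h.mem_of_adj hvw).imp And.left And.right

theorem Subgraph.IsMatching.ncard_edgeSet_le [Finite V] {M : G.Subgraph} (hM : M.IsMatching)
    {c : Set V} (hc : G.IsVertexCover c) : M.edgeSet.ncard ≤ c.ncard := by
  rw [Set.ncard_eq_toFinset_card M.edgeSet, Set.ncard_eq_toFinset_card c]
  refine card_le_card_of_forall_subsingleton (fun e v => v ∈ e) (fun e he => ?_) fun v _ => ?_
  · rw [Set.Finite.mem_toFinset] at he
    induction e using Sym2.ind with
    | h u w =>
      rcases hc (M.adj_sub he) with hu | hw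
      · exact ⟨u, by simpa using hu, Sym2.mem_mk_left u w⟩
      · exact ⟨w, by simpa using hw, Sym2.mem_mk_right u w⟩
  · rintro e ⟨he, hve⟩ e' ⟨he', hve'⟩
    obtain ⟨w, rfl⟩ := Sym2.mem_iff_exists.1 hve
    obtain ⟨w', rfl⟩ := Sym2.mem_iff_exists.1 hve'
    simp only [Set.Finite.mem_toFinset, Subgraph.mem_edgeSet] at he he'
    rw [hM.eq_of_adj_left he he']

theorem IsBipartiteWith.lineGraph_colorable [Fintype V] [DecidableRel G.Adj] {s t : Set V}
    (h : G.IsBipartiteWith s t) {D : ℕ} (hD : ∀ v, G.degree v ≤ D) :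
    G.lineGraph.Colorable D := by
  let T : V → V → ℕ := fun u v => if u ∈ s ∧ G.Adj u v then 1 else 0
  have hrow (u : V) : ∑ v, T u v ≤ D := by
    refine le_trans ?_ (hD u)
    rw [← card_neighborFinset_eq_degree, sum_boole, Nat.cast_id]
    exact card_le_card fun v hv => by simpa using (mem_filter.1 hv).2.2
  have hcol (v : V) : ∑ u, T u v ≤ D := by
    refine le_trans ?_ (hD v)
    rw [← card_neighborFinset_eq_degree, sum_boole, Nat.cast_id]
    exact card_le_card fun u hu => by simpa [adj_comm] using (mem_filter.1 hu).2.2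
  obtain ⟨T', hTT', hrow', hcol'⟩ := exists_le_regular_of_sum_le T hrow hcol
  obtain ⟨σ, hσ, hcover⟩ := exists_injective_cover_of_regular T' D hrow' hcol'
  have hcolor (e : G.edgeSet) : ∃ i, ∃ u ∈ s, (e : Sym2 V) = s(u, σ i u) := by
    obtain ⟨e, he⟩ := e
    induction e using Sym2.ind with
    | h x y =>
      have hT (u v : V) (hu : u ∈ s) (huv : G.Adj u v) : ∃ i, σ i u = v :=
        hcover u v (lt_of_lt_of_le (by simp [T, hu, huv]) (hTT' u v))
      rcases h.mem_of_adj he with ⟨hx, -⟩ | ⟨-, hy⟩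
      · obtain ⟨i, hi⟩ := hT x y hx he
        exact ⟨i, x, hx, by rw [hi]⟩
      · obtain ⟨i, hi⟩ := hT y x hy he.symm
        exact ⟨i, y, hy, by rw [hi]; exact Sym2.eq_swap⟩
  choose c u hu hcu using hcolor
  have hright (e : G.edgeSet) : σ (c e) (u e) ∉ s := fun hs => by
    have hadj : G.Adj (u e) (σ (c e) (u e)) := by simpa only [hcu e, mem_edgeSet] using e.2
    rcases h.mem_of_adj hadj with ⟨-, ht⟩ | ⟨ht, -⟩
    · exact Set.disjoint_left.1 h.disjoint hs ht
    · exact Set.disjoint_left.1 h.disjoint (hu e) ht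
  refine ⟨Coloring.mk c fun {e e'} hadj hce => (lineGraph_adj_iff_exists.1 hadj).1 ?_⟩
  obtain ⟨x, hx, hx'⟩ := (lineGraph_adj_iff_exists.1 hadj).2
  rw [hcu e, Sym2.mem_iff] at hx
  rw [hcu e', Sym2.mem_iff] at hx'
  have huu : u e = u e' := by
    by_cases hxs : x ∈ s
    · have h1 : x = u e := hx.resolve_right fun h' => hright e (h' ▸ hxs)
      have h2 : x = u e' := hx'.resolve_right fun h' => hright e' (h' ▸ hxs)
      exact h1.symm.trans h2
    · have h1 : x = σ (c e) (u e) := hx.resolve_left fun h' => hxs (h' ▸ hu e)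
      have h2 : x = σ (c e') (u e') := hx'.resolve_left fun h' => hxs (h' ▸ hu e')
      rw [hce] at h1
      exact hσ (c e') (h1.symm.trans h2)
  exact Subtype.ext (by rw [hcu e, hcu e', hce, huu])

theorem IsBipartiteWith.card_mul_le_card_edgeFinset [Fintype V] [DecidableRel G.Adj]
    {s t : Finset V} (h : G.IsBipartiteWith s t) {δ : ℝ} (hδ : ∀ v ∈ s, δ ≤ G.degree v) :
    #s * δ ≤ #G.edgeFinset := by
  rw [← isBipartiteWith_sum_degrees_eq_card_edges h, Nat.cast_sum, ← nsmul_eq_mul]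
  exact card_nsmul_le_sum _ _ _ hδ

theorem exists_isMatching_edgeSet_eq {S : Set (Sym2 V)} (hS : S ⊆ G.edgeSet)
    (hdisj : S.Pairwise fun e e' => Disjoint (e : Set V) e') :
    ∃ M : G.Subgraph, M.IsMatching ∧ M.edgeSet = S := by
  let M : G.Subgraph :=
    { verts := {v | ∃ e ∈ S, v ∈ e}
      Adj := fun u w => s(u, w) ∈ S
      adj_sub := fun h => hS h
      edge_vert := fun h => ⟨_, h, Sym2.mem_mk_left _ _⟩
      symm := ⟨fun u w h => by rwa [Sym2.eq_swap]⟩ }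
  refine ⟨M, fun v ⟨e, he, hve⟩ => ?_, ?_⟩
  · obtain ⟨w, rfl⟩ := Sym2.mem_iff_exists.1 hve
    refine ⟨w, he, fun w' hw' => ?_⟩
    by_contra hne
    exact Set.disjoint_left.1 (hdisj hw' he (mt Sym2.congr_right.1 hne))
      (Sym2.mem_mk_left v w') (Sym2.mem_mk_left v w)
  · ext e
    induction e using Sym2.ind
    rfl

theorem exists_isMatching_family_of_lineGraph_colorable [Fintype V] [DecidableRel G.Adj]
    {D : ℕ} (hC : G.lineGraph.Colorable D) :
    ∃ M : Fin D → G.Subgraph, (∀ i, (M i).IsMatching) ∧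
      Pairwise (fun i j => Disjoint (M i).edgeSet (M j).edgeSet) ∧
      ∑ i, (M i).edgeSet.ncard = #G.edgeFinset := by
  obtain ⟨C⟩ := hC
  have hclass (i : Fin D) :
      ∃ M : G.Subgraph, M.IsMatching ∧ M.edgeSet = Subtype.val '' C.colorClass i := by
    refine exists_isMatching_edgeSet_eq (by rintro _ ⟨e, -, rfl⟩; exact e.2) ?_
    rintro _ ⟨e, he, rfl⟩ _ ⟨e', he', rfl⟩ hne
    rw [Set.disjoint_iff_inter_eq_empty, ← Set.not_nonempty_iff_eq_empty]
    exact fun h => C.valid ⟨fun h' => hne (congrArg _ h'), h⟩ (he.trans he'.symm)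
  choose M hM hME using hclass
  refine ⟨M, hM, fun i j hij => ?_, ?_⟩
  · show Disjoint _ _
    rw [hME i, hME j, Set.disjoint_image_iff Subtype.val_injective]
    exact (Set.disjoint_singleton.2 hij).preimage C
  · simp_rw [hME, Set.ncard_image_of_injective _ Subtype.val_injective]
    rw [edgeFinset_card, ← card_univ, card_eq_sum_card_fiberwise (f := C) (t := univ)
      fun _ _ => mem_univ _]
    refine sum_congr rfl fun i _ => ?_
    rw [← Set.ncard_coe_finset]
    congr 1
    ext e
    simp [Coloring.colorClass]

end SimpleGraph

theorem sum_le_card_filter_mul_add {ι R : Type*} [Fintype ι] [Ring R] [LinearOrder R]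
    [IsOrderedRing R] (f : ι → R) {U θ : R} (hU : ∀ i, f i ≤ U) :
    ∑ i, f i ≤ #{i | θ ≤ f i} * U + (Fintype.card ι - #{i | θ ≤ f i}) * θ := by
  have hbad : (Fintype.card ι : R) - #{i | θ ≤ f i} = #{i | ¬θ ≤ f i} := by
    rw [← card_univ, ← card_filter_add_card_filter_not (θ ≤ f ·)]
    push_cast
    exact add_sub_cancel_left _ _
  rw [← sum_filter_add_sum_filter_not univ (θ ≤ f ·), hbad, ← nsmul_eq_mul, ← nsmul_eq_mul]
  exact add_le_add (sum_le_card_nsmul _ _ _ fun i _ => hU i)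
    (sum_le_card_nsmul _ _ _ fun i hi => le_of_not_ge (mem_filter.1 hi).2)

theorem one_sub_ten_sqrt_mul_le {d n γ k D : ℝ} (hd : 0 < d) (hn : 0 < n) (hγ : 0 < γ)
    (hk0 : 0 ≤ k) (hD : D ≤ (1 + 2 * γ) * d)
    (hk : (1 - γ) * n * ((1 - γ) * d) ≤ k * ((1 + γ) * n) + (D - k) * ((1 - 10 * √γ) * n)) :
    (1 - 10 * √γ) * d ≤ k := by
  set s := √γ
  rcases le_or_gt (1 - 10 * s) 0 with hs10 | hs10
  · nlinarith
  have hs : 0 < s := Real.sqrt_pos.2 hγ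
  have hγs : γ = s ^ 2 := (Real.sq_sqrt hγ.le).symm
  have h1 : (1 - γ) * ((1 - γ) * d) ≤ k * (1 + γ) + (D - k) * (1 - 10 * s) :=
    le_of_mul_le_mul_left (by linear_combination hk) hn
  have h2 : (D - k) * (1 - 10 * s) ≤ ((1 + 2 * γ) * d - k) * (1 - 10 * s) := by gcongr
  -- with `γ = s²` this leaves `(k - (1 - 10 s) d) (10 s + s²) ≥ d s² (95 + 30 s + s²)`
  have key : 0 ≤ (k - (1 - 10 * s) * d) * (10 * s + s ^ 2) := by
    rw [hγs] at h1 h2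
    nlinarith [mul_pos hd (pow_pos hs 2), mul_pos hd (pow_pos hs 3), mul_pos hd (pow_pos hs 4)]
  exact sub_nonneg.1 (nonneg_of_mul_nonneg_left key (by positivity))

/-- Lemma 2.10. An almost-regular, almost-balanced bipartite graph contains
at least `(1−10√γ)d` pairwise edge-disjoint matchings, each of size at least `(1−10√γ)n`. -/
theorem bipartite_many_large_matchings (d n γ : ℝ) (hd : 0 < d) (hn : 0 < n)
    (hγ0 : 0 < γ) (hγ1 : γ < 1) (hγd : 1 ≤ γ * d) :
    ∀ (V : Type) [Fintype V] (G : SimpleGraph V) (A B : Finset V),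
      Disjoint A B → A ∪ B = Finset.univ →
      ((1 - γ) * n ≤ (A.card : ℝ) ∧ (A.card : ℝ) ≤ (1 + γ) * n) →
      ((1 - γ) * n ≤ (B.card : ℝ) ∧ (B.card : ℝ) ≤ (1 + γ) * n) →
      (∀ u v : V, G.Adj u v → (u ∈ A ∧ v ∈ B) ∨ (u ∈ B ∧ v ∈ A)) →
      (∀ v : V, (1 - γ) * d ≤ (G.degree v : ℝ) ∧ (G.degree v : ℝ) ≤ (1 + γ) * d) →
      ∃ (k : ℕ) (M : Fin k → G.Subgraph),
        ((1 - 10 * Real.sqrt γ) * d ≤ (k : ℝ)) ∧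
        (∀ i, (M i).IsMatching) ∧
        (∀ i j, i ≠ j → Disjoint (M i).edgeSet (M j).edgeSet) ∧
        (∀ i, (1 - 10 * Real.sqrt γ) * n ≤ (((M i).edgeSet.ncard : ℕ) : ℝ)) := by
  intro V _ G A B hAB _ hA _ hAdj hdeg
  have hbip : G.IsBipartiteWith A B := ⟨disjoint_coe.2 hAB, hAdj⟩
  set D := ⌈(1 + γ) * d⌉₊
  have hdegD (v : V) : G.degree v ≤ D := by exact_mod_cast (hdeg v).2.trans (Nat.le_ceil _)
  have hDd : (D : ℝ) ≤ (1 + 2 * γ) * d := by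
    linarith [Nat.ceil_lt_add_one (by positivity : 0 ≤ (1 + γ) * d)]
  obtain ⟨M, hM, hMdisj, hMsum⟩ :=
    exists_isMatching_family_of_lineGraph_colorable (hbip.lineGraph_colorable hdegD)
  have hMA (i : Fin D) : ((M i).edgeSet.ncard : ℝ) ≤ (1 + γ) * n := by
    refine le_trans ?_ hA.2
    exact_mod_cast Set.ncard_coe_finset A ▸ (hM i).ncard_edgeSet_le hbip.isVertexCover
  have hedges : (1 - γ) * n * ((1 - γ) * d) ≤ ∑ i, ((M i).edgeSet.ncard : ℝ) := by
    rw [← Nat.cast_sum, hMsum]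
    calc _ ≤ #A * ((1 - γ) * d) := by gcongr; exact hA.1
      _ ≤ _ := hbip.card_mul_le_card_edgeFinset fun v _ => (hdeg v).1
  set good : Finset (Fin D) := {i | (1 - 10 * √γ) * n ≤ (M i).edgeSet.ncard}
  have hcount := sum_le_card_filter_mul_add _ hMA (θ := (1 - 10 * √γ) * n)
  rw [Fintype.card_fin] at hcount
  refine ⟨#good, M ∘ good.orderEmbOfFin rfl, ?_, fun i => hM _,
    fun i j hij => hMdisj ((good.orderEmbOfFin rfl).injective.ne hij),
    fun i => (mem_filter.1 (good.orderEmbOfFin_mem rfl i)).2⟩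
  exact one_sub_ten_sqrt_mul_le hd hn hγ0 (Nat.cast_nonneg _) hDd (hedges.trans hcount)
end
end

section
/- For every K ≥ 1 and every 0 < β ≤ 1/4 there exists λ₀ > 0 such that for every 0 < λ ≤ λ₀ there exists d₀ ∈ ℕ such that the following holds for all d ≥ d₀. Let G be a (β,d,K)-dense graph. Then, for some t ≤ 2K, there exist a set J ⊆ V(G) and pairwise vertex-disjoint subgraphs G₁,…,G_t of G with V(G) = V(G₁) ∪ … ∪ V(G_t) such that: (i) |J| ≤ √λ·d; (ii) G_i − J is (2β,d,K)-dense for each i ∈ [t]; and (iii) G_i is (λ^{1/4}, λ, d)-connected for each i ∈ [t]. -/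
open SimpleGraph Finset
open scoped Classical symmDiff

noncomputable section

/-!
Write `x = λ^{1/4}` and consider partitions of `V(G)` into `t` parts of size at least `xd` with at
most `(t - 1)λd²` edges between different parts; take one with as many parts as possible. If a
part `S` were not `(x, λ, d)`-connected, some set `F` of at most `λd²` edges would separate two sets
of size `xd` in `G[S]`, and the vertices reachable from one of them in `G[S] - F` would split `S`
into two parts of size at least `xd` joined by at most `λd²` edges, contradicting maximality.
Since `t·xd ≤ Kd`, at most `Kλd²/x = Kx³d²` edges run between parts, so by Markov's inequality
all but `x²d = √λ·d` vertices (the set `J`) have at most `2Kxd` neighbours outside their own part.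
After deleting `J` every part is still `(2β, d, K)`-dense, hence has more than `d/2` vertices, so
`t ≤ 2K`.
-/

namespace Finpartition

variable {α : Type*} {s p t₁ t₂ : Finset α} (P : Finpartition s)

theorem parts_avoid_of_mem (hp : p ∈ P.parts) : (P.avoid p).parts = P.parts.erase p := by
  ext c
  rw [mem_avoid, mem_erase]
  constructor
  · rintro ⟨d, hd, hdp, rfl⟩
    have hne : d ≠ p := by rintro rfl; exact hdp le_rfl
    have hdisj : Disjoint d p := P.disjoint hd hp hne
    rw [sdiff_eq_self_of_disjoint hdisj]
    exact ⟨hne, hd⟩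
  · rintro ⟨hne, hc⟩
    have hdisj : Disjoint c p := P.disjoint hc hp hne
    exact ⟨c, hc, fun hcp => P.ne_bot hc (hdisj.eq_bot_of_le hcp), sdiff_eq_self_of_disjoint hdisj⟩

theorem exists_parts_eq_insert_insert_erase (hp : p ∈ P.parts) (h₁ : t₁.Nonempty)
    (h₂ : t₂.Nonempty) (ht : Disjoint t₁ t₂) (hunion : t₁ ∪ t₂ = p) :
    ∃ Q : Finpartition s, Q.parts = insert t₁ (insert t₂ (P.parts.erase p)) := by
  have h₂s : Disjoint (s \ p) t₂ :=
    disjoint_sdiff_self_left.mono_right (hunion ▸ subset_union_right)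
  have h₁s : Disjoint (s \ p ∪ t₂) t₁ :=
    disjoint_union_left.2 ⟨disjoint_sdiff_self_left.mono_right (hunion ▸ subset_union_left), ht.symm⟩
  refine ⟨((P.avoid p).extend h₂.ne_empty h₂s rfl).extend h₁.ne_empty h₁s ?_, ?_⟩
  · rw [sup_eq_union, sup_eq_union, union_assoc, union_comm t₂, hunion,
      sdiff_union_of_subset (P.le hp)]
  · simp only [extend_parts, P.parts_avoid_of_mem hp]

theorem exists_split (hp : p ∈ P.parts) (h₁ : t₁.Nonempty) (h₂ : t₂.Nonempty)
    (ht : Disjoint t₁ t₂) (hunion : t₁ ∪ t₂ = p) :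
    ∃ Q : Finpartition s, (∀ q ∈ Q.parts, q ∈ P.parts ∨ q = t₁ ∨ q = t₂) ∧
      #Q.parts = #P.parts + 1 ∧ ∀ f : Finset α → ℝ,
        ∑ q ∈ Q.parts, f q + f p = ∑ q ∈ P.parts, f q + f t₁ + f t₂ := by
  obtain ⟨Q, hQ⟩ := P.exists_parts_eq_insert_insert_erase hp h₁ h₂ ht hunion
  have hnotMem : ∀ t, t ⊆ p → t.Nonempty → t ∉ P.parts.erase p := by
    rintro t htp ⟨a, ha⟩ hmem
    rw [mem_erase] at hmem
    exact Finset.disjoint_left.1 (P.disjoint hmem.2 hp hmem.1) ha (htp ha)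
  have h₂nm := hnotMem t₂ (hunion ▸ subset_union_right) h₂
  have h₁nm : t₁ ∉ insert t₂ (P.parts.erase p) := by
    rw [mem_insert, not_or]
    exact ⟨fun h => h₁.ne_empty (by simpa [h] using ht),
      hnotMem t₁ (hunion ▸ subset_union_left) h₁⟩
  refine ⟨Q, fun q hq => ?_, ?_, fun f => ?_⟩
  · rw [hQ, mem_insert, mem_insert] at hq
    rcases hq with rfl | rfl | hq
    exacts [Or.inr (Or.inl rfl), Or.inr (Or.inr rfl), Or.inl (mem_of_mem_erase hq)]
  · rw [hQ, card_insert_of_notMem h₁nm, card_insert_of_notMem h₂nm, card_erase_of_mem hp,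
      Nat.sub_add_cancel (card_pos.2 ⟨p, hp⟩)]
  · rw [hQ, sum_insert h₁nm, sum_insert h₂nm, ← sum_erase_add _ _ hp]
    ring

theorem card_parts_mul_le {m : ℝ} (h : ∀ p ∈ P.parts, m ≤ #p) : #P.parts * m ≤ #s := by
  rw [← P.sum_card_parts, Nat.cast_sum, ← nsmul_eq_mul]
  exact card_nsmul_le_sum _ _ _ h

theorem exists_fin_enumeration :
    ∃ e : Fin #P.parts → Finset α, (∀ i, e i ∈ P.parts) ∧
      (∀ i j, i ≠ j → Disjoint (e i) (e j)) ∧ ∀ a ∈ s, ∃ i, a ∈ e i := by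
  let e := P.parts.equivFin.symm
  refine ⟨fun i => e i, fun i => (e i).2,
    fun i j hij => P.disjoint (e i).2 (e j).2 fun h => hij (e.injective (Subtype.ext h)),
    fun a ha => ?_⟩
  obtain ⟨p, hp, hap⟩ := P.exists_mem ha
  exact ⟨e.symm ⟨p, hp⟩, by simpa using hap⟩

end Finpartition

/-- The vertices reachable from `A` after deleting `F` form a set whose boundary lies in `F`. -/
theorem exists_cut_of_not_wellConnected {W : Type} [Finite W] {H : SimpleGraph W}
    {ζ lam d : ℝ} (h : ¬ WellConnected H ζ lam d) :
    ∃ R : Set W, ζ * d ≤ R.ncard ∧ ζ * d ≤ Rᶜ.ncard ∧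
      ∃ F ⊆ H.edgeSet, F.ncard ≤ lam * d ^ 2 ∧ ∀ u ∈ R, ∀ v ∉ R, H.Adj u v → s(u, v) ∈ F := by
  simp only [WellConnected, not_forall, not_exists, not_and] at h
  obtain ⟨A, B, hA, hB, F, hFH, hF, hAB⟩ := h
  set R := {v | ∃ a ∈ A, (H.deleteEdges F).Reachable a v}
  have hAR : A ⊆ R := fun a ha => ⟨a, ha, .refl a⟩
  have hBR : B ⊆ Rᶜ := by
    rintro b hb ⟨a, ha, ⟨p⟩⟩
    exact hAB a ha b hb p.toPath p.toPath.2
  refine ⟨R, hA.trans (by exact_mod_cast Set.ncard_le_ncard hAR),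
    hB.trans (by exact_mod_cast Set.ncard_le_ncard hBR), F, hFH, hF, ?_⟩
  rintro u ⟨a, ha, hau⟩ v hvR huv
  by_contra huvF
  exact hvR ⟨a, ha, hau.trans (deleteEdges_adj.2 ⟨huv, huvF⟩).reachable⟩

namespace SimpleGraph

section Interedges

variable {V : Type} (G : SimpleGraph V)

theorem card_interedges_comm (s t : Finset V) : #(G.interedges s t) = #(G.interedges t s) :=
  have := G.symm
  Rel.card_interedges_comm s t

theorem card_interedges_union_left {s₁ s₂ : Finset V} (h : Disjoint s₁ s₂) (t : Finset V) :
    #(G.interedges (s₁ ∪ s₂) t) = #(G.interedges s₁ t) + #(G.interedges s₂ t) := by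
  rw [← card_union_of_disjoint (G.interedges_disjoint_left h t)]
  congr 1
  ext ⟨a, b⟩
  simp only [mem_union, mk_mem_interedges_iff]
  tauto

theorem card_interedges_union_right (s : Finset V) {t₁ t₂ : Finset V} (h : Disjoint t₁ t₂) :
    #(G.interedges s (t₁ ∪ t₂)) = #(G.interedges s t₁) + #(G.interedges s t₂) := by
  rw [card_interedges_comm, card_interedges_union_left G h, card_interedges_comm,
    card_interedges_comm _ t₂]

variable [Fintype V]

theorem card_interedges_eq_sum (s t : Finset V) :
    #(G.interedges s t) = ∑ a ∈ s, #(G.neighborFinset a ∩ t) := by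
  rw [interedges_def, card_filter, sum_product]
  refine sum_congr rfl fun a _ => ?_
  rw [← card_filter]
  congr 1
  ext b
  simp [and_comm]

theorem card_interedges_compl_add_card_interedges_compl {S₁ S₂ : Finset V} (h : Disjoint S₁ S₂) :
    #(G.interedges S₁ S₁ᶜ) + #(G.interedges S₂ S₂ᶜ) =
      #(G.interedges (S₁ ∪ S₂) (S₁ ∪ S₂)ᶜ) + 2 * #(G.interedges S₁ S₂) := by
  have hcompl : ∀ {A B : Finset V}, Disjoint A B → Aᶜ = B ∪ (A ∪ B)ᶜ := by
    intro A B hAB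
    ext x
    have := fun hx : x ∈ A => Finset.disjoint_left.1 hAB hx
    simp only [mem_compl, mem_union]
    tauto
  rw [hcompl h, hcompl h.symm, union_comm S₂ S₁,
    card_interedges_union_right G _ (disjoint_compl_right.mono_left subset_union_right),
    card_interedges_union_right G _ (disjoint_compl_right.mono_left subset_union_left),
    card_interedges_union_left G h, card_interedges_comm G S₂ S₁]
  ring

end Interedges

variable {V : Type} [Fintype V] {G : SimpleGraph V}

theorem exists_sparse_split_of_not_wellConnected {ζ lam d : ℝ} {S : Finset V}
    (h : ¬ WellConnected ((⊤ : G.Subgraph).induce (S : Set V)).coe ζ lam d) :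
    ∃ S₁ S₂ : Finset V, Disjoint S₁ S₂ ∧ S₁ ∪ S₂ = S ∧ ζ * d ≤ #S₁ ∧ ζ * d ≤ #S₂ ∧
      #(G.interedges S₁ S₂) ≤ lam * d ^ 2 := by
  obtain ⟨R, hR, hRc, F, -, hF, hcut⟩ := exists_cut_of_not_wellConnected h
  let ι : ((⊤ : G.Subgraph).induce (S : Set V)).verts ↪ V := Function.Embedding.subtype _
  set S₁ := R.toFinset.map ι
  set S₂ := Rᶜ.toFinset.map ι
  have hdisj : Disjoint S₁ S₂ :=
    (disjoint_map _).2 (Set.disjoint_toFinset.2 disjoint_compl_right)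
  refine ⟨S₁, S₂, hdisj, ?_, ?_, ?_, ?_⟩
  · rw [← map_union, ← Set.toFinset_union]
    ext v
    simp [ι]
  · simpa [S₁, Set.ncard_eq_toFinset_card'] using hR
  · simpa [S₂, Set.ncard_eq_toFinset_card'] using hRc
  have hmaps : Set.MapsTo (fun e : V × V => s(e.1, e.2)) (G.interedges S₁ S₂)
      (F.toFinset.image (Sym2.map ι)) := by
    rintro ⟨a, b⟩ hab
    obtain ⟨ha, hb, hab⟩ := (mk_mem_interedges_iff G).1 hab
    obtain ⟨u, hu, rfl⟩ := mem_map.1 ha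
    obtain ⟨w, hw, rfl⟩ := mem_map.1 hb
    rw [Set.mem_toFinset] at hu hw
    have huw : ((⊤ : G.Subgraph).induce (S : Set V)).coe.Adj u w := by
      simpa [ι] using ⟨u.2, w.2, hab⟩
    exact mem_image.2 ⟨s(u, w), Set.mem_toFinset.2 (hcut u hu w hw huw), rfl⟩
  have hinj : Set.InjOn (fun e : V × V => s(e.1, e.2)) (G.interedges S₁ S₂) := by
    rintro ⟨a, b⟩ hab ⟨a', b'⟩ hab' heq
    obtain ⟨ha, hb, -⟩ := (mk_mem_interedges_iff G).1 hab
    obtain ⟨ha', hb', -⟩ := (mk_mem_interedges_iff G).1 hab'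
    rcases Sym2.eq_iff.1 heq with ⟨rfl, rfl⟩ | ⟨rfl, rfl⟩
    · rfl
    · exact (Finset.disjoint_left.1 hdisj ha hb').elim
  calc (#(G.interedges S₁ S₂) : ℝ)
      ≤ #(F.toFinset.image (Sym2.map ι)) := by
        exact_mod_cast card_le_card_of_injOn _ hmaps hinj
    _ ≤ F.ncard := by exact_mod_cast card_image_le.trans (Set.ncard_eq_toFinset_card' F).ge
    _ ≤ lam * d ^ 2 := hF

variable (G) in
/-- `interedges` counts ordered pairs, so each edge between two parts is counted twice. -/
def IsSparselyCut (P : Finpartition (univ : Finset V)) (ζ lam d : ℝ) : Prop :=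
  (∀ p ∈ P.parts, ζ * d ≤ #p) ∧
    ∑ p ∈ P.parts, (#(G.interedges p pᶜ) : ℝ) ≤ 2 * (#P.parts - 1) * (lam * d ^ 2)

theorem isSparselyCut_indiscrete {ζ lam d : ℝ} (hV : ζ * d ≤ Fintype.card V)
    (hne : (univ : Finset V) ≠ ∅) :
    G.IsSparselyCut (Finpartition.indiscrete hne) ζ lam d := by
  simp [IsSparselyCut, hV, interedges_def]

theorem IsSparselyCut.exists_split {P : Finpartition (univ : Finset V)} {ζ lam d : ℝ}
    (hP : G.IsSparselyCut P ζ lam d) (hζd : 0 < ζ * d) {p : Finset V} (hp : p ∈ P.parts)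
    (hnc : ¬ WellConnected ((⊤ : G.Subgraph).induce (p : Set V)).coe ζ lam d) :
    ∃ Q : Finpartition (univ : Finset V), G.IsSparselyCut Q ζ lam d ∧ #Q.parts = #P.parts + 1 := by
  obtain ⟨S₁, S₂, hdisj, rfl, h₁, h₂, hcut⟩ := exists_sparse_split_of_not_wellConnected hnc
  obtain ⟨Q, hQparts, hQcard, hQsum⟩ := P.exists_split hp
    (card_pos.1 (by exact_mod_cast hζd.trans_le h₁))
    (card_pos.1 (by exact_mod_cast hζd.trans_le h₂)) hdisj rfl
  refine ⟨Q, ⟨fun q hq => ?_, ?_⟩, hQcard⟩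
  · rcases hQparts q hq with hq | rfl | rfl
    exacts [hP.1 q hq, h₁, h₂]
  · have hsum := hQsum fun q => (#(G.interedges q qᶜ) : ℝ)
    have hbd : (#(G.interedges S₁ S₁ᶜ) + #(G.interedges S₂ S₂ᶜ) : ℝ) =
        #(G.interedges (S₁ ∪ S₂) (S₁ ∪ S₂)ᶜ) + 2 * #(G.interedges S₁ S₂) := by
      exact_mod_cast card_interedges_compl_add_card_interedges_compl G hdisj
    rw [hQcard]
    push_cast
    linarith [hP.2]

/-- A sparsely cut partition with the most parts has no part left to split. -/
theorem exists_isSparselyCut_forall_wellConnected {ζ lam d : ℝ} (hζd : 0 < ζ * d)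
    (hV : ζ * d ≤ Fintype.card V) :
    ∃ P : Finpartition (univ : Finset V), G.IsSparselyCut P ζ lam d ∧
      ∀ p ∈ P.parts, WellConnected ((⊤ : G.Subgraph).induce (p : Set V)).coe ζ lam d := by
  have hne : (univ : Finset V) ≠ ∅ :=
    (card_pos.1 (by rw [card_univ]; exact_mod_cast hζd.trans_le hV)).ne_empty
  obtain ⟨P, hP, hmax⟩ := (univ.filter fun P => G.IsSparselyCut P ζ lam d).exists_max_image
    (fun P => #P.parts) ⟨_, mem_filter.2 ⟨mem_univ _, isSparselyCut_indiscrete hV hne⟩⟩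
  refine ⟨P, (mem_filter.1 hP).2, fun p hp => by_contra fun hnc => ?_⟩
  obtain ⟨Q, hQ, hQcard⟩ := (mem_filter.1 hP).2.exists_split hζd hp hnc
  have := hmax Q (mem_filter.2 ⟨mem_univ _, hQ⟩)
  omega

theorem degree_le_card_inter_sdiff_add (v : V) (p J : Finset V) :
    G.degree v ≤ #(G.neighborFinset v ∩ (p \ J)) + #J + #(G.neighborFinset v ∩ pᶜ) := by
  rw [← card_neighborFinset_eq_degree]
  refine (card_le_card fun w hw => ?_).trans
    ((card_union_le _ _).trans (Nat.add_le_add_right (card_union_le _ _) _))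
  by_cases hwp : w ∈ p <;> by_cases hwJ : w ∈ J <;> simp [hw, hwp, hwJ]

/-- Markov's inequality for the number of neighbours outside the own part. -/
theorem exists_card_mul_le_sum_of_forall_card_inter_compl_le
    (P : Finpartition (univ : Finset V)) {τ : ℝ} (hτ : 0 ≤ τ) :
    ∃ J : Finset V, #J * τ ≤ ∑ p ∈ P.parts, (#(G.interedges p pᶜ) : ℝ) ∧
      ∀ p ∈ P.parts, ∀ v ∈ p, v ∉ J → #(G.neighborFinset v ∩ pᶜ) ≤ τ := by
  set bad : Finset V → Finset V := fun p => p.filter fun v => τ < #(G.neighborFinset v ∩ pᶜ)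
  refine ⟨P.parts.biUnion bad, ?_, fun p hp v hv hvJ => not_lt.1 fun hlt =>
    hvJ (mem_biUnion.2 ⟨p, hp, mem_filter.2 ⟨hv, hlt⟩⟩)⟩
  calc (#(P.parts.biUnion bad) : ℝ) * τ ≤ (∑ p ∈ P.parts, (#(bad p) : ℝ)) * τ := by
        gcongr; exact_mod_cast card_biUnion_le
    _ = ∑ p ∈ P.parts, #(bad p) * τ := sum_mul ..
    _ ≤ ∑ p ∈ P.parts, (#(G.interedges p pᶜ) : ℝ) := by
        gcongr with p hp
        rw [card_interedges_eq_sum, Nat.cast_sum, ← nsmul_eq_mul]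
        exact (card_nsmul_le_sum _ _ _ fun v hv => (mem_filter.1 hv).2.le).trans
          (sum_le_sum_of_subset_of_nonneg (filter_subset _ _) fun _ _ _ => Nat.cast_nonneg _)

theorem isDenseSubgraph_induce_deleteVerts {p J : Finset V} {η d K : ℝ}
    (hne : (p \ J).Nonempty) (hV : (Fintype.card V : ℝ) ≤ K * d)
    (hdeg : ∀ v ∈ p \ J, (1 - η) * d ≤ #(G.neighborFinset v ∩ (p \ J))) :
    IsDenseSubgraph (((⊤ : G.Subgraph).induce (p : Set V)).deleteVerts (J : Set V)) η d K := by
  have hverts : (((⊤ : G.Subgraph).induce (p : Set V)).deleteVerts (J : Set V)).verts =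
      ↑(p \ J) := by simp
  refine ⟨hverts ▸ hne, ?_, fun v hv => ?_⟩
  · rw [hverts, Set.ncard_coe_finset]
    exact le_trans (by exact_mod_cast card_le_univ _) hV
  · rw [hverts, mem_coe] at hv
    convert hdeg v hv using 2
    rw [← Set.ncard_coe_finset]
    congr 1
    ext w
    simp only [Subgraph.mem_neighborSet, Subgraph.induce_adj, Subgraph.induce_verts,
      Subgraph.top_adj, Set.mem_sdiff, SetLike.mem_coe, coe_inter, coe_neighborFinset, coe_sdiff,
      Set.mem_inter_iff, mem_neighborSet]
    have := mem_sdiff.1 hv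
    tauto

theorem card_neighborFinset_inter_lt_card {v : V} {s t : Finset V} (hv : v ∈ s) (hts : t ⊆ s) :
    #(G.neighborFinset v ∩ t) < #s :=
  card_lt_card ⟨inter_subset_right.trans hts, fun h => by simpa using mem_inter.1 (h hv)⟩

theorem IsDenseGraph.sub_mul_lt_card {η d K : ℝ} (hG : IsDenseGraph G η d K) :
    (1 - η) * d < Fintype.card V := by
  obtain ⟨v⟩ := Fintype.card_pos_iff.1 hG.1
  exact (hG.2.2 v).trans_lt (by exact_mod_cast G.degree_lt_card_verts v)

theorem IsSparselyCut.exists_card_le_forall_card_inter_compl_le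
    {P : Finpartition (univ : Finset V)} {K x d : ℝ} (hP : G.IsSparselyCut P x (x ^ 4) d)
    (hVK : (Fintype.card V : ℝ) ≤ K * d) (hK : 0 < K) (hx : 0 < x) (hd : 0 < d) :
    ∃ J : Finset V, #J ≤ x ^ 2 * d ∧
      ∀ p ∈ P.parts, ∀ v ∈ p, v ∉ J → #(G.neighborFinset v ∩ pᶜ) ≤ 2 * K * x * d := by
  have htx : #P.parts * x ≤ K := by
    have := P.card_parts_mul_le hP.1
    rw [card_univ] at this
    nlinarith
  obtain ⟨J, hJ, hbdry⟩ := exists_card_mul_le_sum_of_forall_card_inter_compl_le (G := G) P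
    (by positivity : 0 ≤ 2 * K * x * d)
  have hcut : 2 * (#P.parts - 1) * (x ^ 4 * d ^ 2) ≤ x ^ 2 * d * (2 * K * x * d) := by
    nlinarith [mul_le_mul_of_nonneg_right htx (by positivity : 0 ≤ x ^ 3 * d ^ 2),
      (by positivity : 0 ≤ x ^ 4 * d ^ 2)]
  exact ⟨J, le_of_mul_le_mul_right (hJ.trans (hP.2.trans hcut)) (by positivity), hbdry⟩

theorem IsSparselyCut.exists_dense_pieces {P : Finpartition (univ : Finset V)} {β K x d : ℝ}
    (hG : IsDenseGraph G β d K) (hd : 0 < d) (hx : 0 < x) (hxβ : 2 * K * x + x ^ 2 ≤ β)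
    (hβ : β ≤ 1 / 4) (hP : G.IsSparselyCut P x (x ^ 4) d) :
    ∃ J : Finset V, #J ≤ x ^ 2 * d ∧ #P.parts ≤ 2 * K ∧
      ∀ p ∈ P.parts, (p \ J).Nonempty ∧
        ∀ v ∈ p \ J, (1 - 2 * β) * d ≤ #(G.neighborFinset v ∩ (p \ J)) := by
  obtain ⟨hV0, hVK, hdeg⟩ := hG
  have hK : 0 < K := pos_of_mul_pos_left ((Nat.cast_pos.2 hV0).trans_le hVK) hd.le
  obtain ⟨J, hJx, hbdry⟩ := hP.exists_card_le_forall_card_inter_compl_le hVK hK hx hd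
  have hdense : ∀ p ∈ P.parts, ∀ v ∈ p \ J,
      (1 - 2 * β) * d ≤ #(G.neighborFinset v ∩ (p \ J)) := by
    intro p hp v hv
    have h₁ := hbdry p hp v (mem_sdiff.1 hv).1 (mem_sdiff.1 hv).2
    have h₂ : (G.degree v : ℝ) ≤
        #(G.neighborFinset v ∩ (p \ J)) + #J + #(G.neighborFinset v ∩ pᶜ) := by
      exact_mod_cast degree_le_card_inter_sdiff_add v p J
    nlinarith [hdeg v, mul_le_mul_of_nonneg_right hxβ hd.le]
  have hne : ∀ p ∈ P.parts, (p \ J).Nonempty := by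
    intro p hp
    have hsplit : (#p : ℝ) ≤ #(p \ J) + #J := by exact_mod_cast card_le_card_sdiff_add_card
    have : x ^ 2 * d < x * d := mul_lt_mul_of_pos_right (by nlinarith) hd
    have : (0 : ℝ) < #(p \ J) := by linarith [hP.1 p hp]
    exact card_pos.1 (by exact_mod_cast this)
  refine ⟨J, hJx, ?_, fun p hp => ⟨hne p hp, hdense p hp⟩⟩
  have hhalf : ∀ p ∈ P.parts, d / 2 ≤ #p := by
    intro p hp
    obtain ⟨v, hv⟩ := hne p hp
    have : (#(G.neighborFinset v ∩ (p \ J)) : ℝ) < #p := by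
      exact_mod_cast card_neighborFinset_inter_lt_card (mem_sdiff.1 hv).1 sdiff_subset
    nlinarith [hdense p hp v hv]
  have := P.card_parts_mul_le hhalf
  rw [card_univ] at this
  nlinarith

end SimpleGraph

theorem two_mul_mul_add_sq_le {K β x : ℝ} (hK : 1 ≤ K) (hx : 0 ≤ x) (hxβ : 3 * K * x ≤ β)
    (hβ : β ≤ 1) : 2 * K * x + x ^ 2 ≤ β := by
  nlinarith

/-- Lemma 5.2. A `(β,d,K)`-dense graph can be partitioned (after setting
aside a small set `J`) into at most `2K` well-connected dense pieces. -/
theorem partition_dense_graph_into_connected_pieces (K β : ℝ) (hK : 1 ≤ K)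
    (hβ0 : 0 < β) (hβ1 : β ≤ 1 / 4) :
    ∃ lam₀ : ℝ, 0 < lam₀ ∧ ∀ lam : ℝ, 0 < lam → lam ≤ lam₀ →
      ∃ d₀ : ℕ, ∀ d : ℕ, d₀ ≤ d →
        ∀ (V : Type) [Fintype V] (G : SimpleGraph V),
          IsDenseGraph G β d K →
          ∃ (t : ℕ) (J : Finset V) (Gs : Fin t → G.Subgraph),
            ((t : ℝ) ≤ 2 * K) ∧
            (∀ i j, i ≠ j → Disjoint (Gs i).verts (Gs j).verts) ∧
            ((⋃ i, (Gs i).verts) = Set.univ) ∧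
            ((J.card : ℝ) ≤ Real.sqrt lam * d) ∧
            (∀ i, IsDenseSubgraph ((Gs i).deleteVerts (J : Set V)) (2 * β) d K) ∧
            (∀ i, WellConnected (Gs i).coe (lam ^ ((1 : ℝ) / 4)) lam d) := by
  have hK0 : 0 < K := by linarith
  refine ⟨(β / (3 * K)) ^ 4, by positivity, fun lam hlam hlam₀ => ⟨0, fun d _ V _ G hG => ?_⟩⟩
  set x := lam ^ ((1 : ℝ) / 4)
  have hx : 0 < x := by positivity
  have hx4 : x ^ 4 = lam := by
    rw [← Real.rpow_natCast, ← Real.rpow_mul hlam.le]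
    norm_num
  have hxβ : 3 * K * x ≤ β := by
    rw [mul_comm, ← le_div_iff₀ (by positivity)]
    exact (pow_le_pow_iff_left₀ hx.le (by positivity) four_ne_zero).1 (hx4 ▸ hlam₀)
  have hd : (0 : ℝ) < d := pos_of_mul_pos_right ((Nat.cast_pos.2 hG.1).trans_le hG.2.1) hK0.le
  obtain ⟨P, hP, hPwc⟩ := G.exists_isSparselyCut_forall_wellConnected (lam := lam)
    (mul_pos hx hd) (hG.sub_mul_lt_card.le.trans' (by gcongr; nlinarith))
  rw [← hx4] at hP
  obtain ⟨J, hJ, ht, hpieces⟩ := hP.exists_dense_pieces hG hd hx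
    (two_mul_mul_add_sq_le hK hx.le hxβ (by linarith)) hβ1
  obtain ⟨e, he, hdisj, hcover⟩ := P.exists_fin_enumeration
  refine ⟨#P.parts, J, fun i => (⊤ : G.Subgraph).induce (e i : Set V), ht,
    fun i j hij => disjoint_coe.2 (hdisj i j hij),
    Set.eq_univ_of_forall fun v => Set.mem_iUnion.2 (hcover v (mem_univ v)), ?_,
    fun i => isDenseSubgraph_induce_deleteVerts (hpieces _ (he i)).1 hG.2.1 (hpieces _ (he i)).2,
    fun i => hPwc _ (he i)⟩
  rwa [← hx4, show x ^ 4 = (x ^ 2) ^ 2 by ring, Real.sqrt_sq (by positivity)]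
end
end

section
/- Let d ≥ 1, let 0 < ζ, λ ≤ 1, and let K ≥ 1. Let G be a (ζ,λ,d)-connected graph with at most K·d vertices, and let U, V ⊆ V(G) be sets each of size at least ζ·d. Then G contains a path from U to V of length at most 8K/λ. -/
open SimpleGraph Finset
open scoped Classical symmDiff

noncomputable section

/-!
Let `B r` be the set of vertices within distance `r` of `U` and `m = ⌈K/λ⌉`. As `|B (2m)| ≤ Kd`,
some annulus `B (2t+2) \ B (2t)` with `t < m` has at most `λd` vertices. Every edge leaving
`B (2t+1)` has both ends in that annulus, so there are at most `(λd)² ≤ λd²` of them. After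
deleting them, `(ζ,λ,d)`-connectivity still joins `U` to `W`, so this path ends inside `B (2t+1)`:
some vertex of `W` is within distance `2t + 1 < 2m ≤ 4K/λ` of `U`.
-/

namespace SimpleGraph

variable {V : Type} (G : SimpleGraph V)

def edgeBoundary (X : Set V) : Set (Sym2 V) :=
  {e | ∃ v ∈ X, ∃ w ∉ X, G.Adj v w ∧ e = s(v, w)}

variable {G}

theorem edgeBoundary_subset_edgeSet (X : Set V) : G.edgeBoundary X ⊆ G.edgeSet := by
  rintro _ ⟨v, -, w, -, hvw, rfl⟩
  exact hvw

theorem Walk.end_mem_of_start_mem {X : Set V} {u v : V}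
    (p : (G.deleteEdges (G.edgeBoundary X)).Walk u v) (hu : u ∈ X) : v ∈ X := by
  by_contra hv
  obtain ⟨e, -, he, he'⟩ := p.exists_boundary_dart X hu hv
  have hadj := e.adj
  rw [deleteEdges_adj] at hadj
  exact hadj.2 ⟨e.fst, he, e.snd, he', hadj.1, rfl⟩

theorem WellConnected.exists_mem_of_edgeBoundary {ζ lam d : ℝ} (hG : WellConnected G ζ lam d)
    {U W X : Set V} (hU : ζ * d ≤ U.ncard) (hW : ζ * d ≤ W.ncard) (hUX : U ⊆ X)
    (hX : ((G.edgeBoundary X).ncard : ℝ) ≤ lam * d ^ 2) : ∃ w ∈ W, w ∈ X := by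
  obtain ⟨u, hu, w, hw, p, -⟩ := hG U W hU hW _ (edgeBoundary_subset_edgeSet X) hX
  exact ⟨w, hw, p.end_mem_of_start_mem (hUX hu)⟩

variable [Fintype V] (G)

def cthickening (U : Finset V) (n : ℕ) : Finset V :=
  univ.filter fun v => ∃ u ∈ U, ∃ p : G.Walk u v, p.length ≤ n

variable {G} {U : Finset V}

theorem mem_cthickening {n : ℕ} {v : V} :
    v ∈ G.cthickening U n ↔ ∃ u ∈ U, ∃ p : G.Walk u v, p.length ≤ n := by
  simp [cthickening]

theorem subset_cthickening (n : ℕ) : U ⊆ G.cthickening U n := fun u hu =>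
  mem_cthickening.2 ⟨u, hu, .nil, Nat.zero_le n⟩

theorem cthickening_mono {m n : ℕ} (h : m ≤ n) : G.cthickening U m ⊆ G.cthickening U n :=
  fun _ hv =>
    let ⟨u, hu, p, hp⟩ := mem_cthickening.1 hv
    mem_cthickening.2 ⟨u, hu, p, hp.trans h⟩

theorem mem_cthickening_succ_of_adj {n : ℕ} {v w : V} (hv : v ∈ G.cthickening U n)
    (hvw : G.Adj v w) : w ∈ G.cthickening U (n + 1) :=
  let ⟨u, hu, p, hp⟩ := mem_cthickening.1 hv
  mem_cthickening.2 ⟨u, hu, p.concat hvw, by rw [Walk.length_concat]; omega⟩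

theorem exists_isPath_of_mem_cthickening {n : ℕ} {v : V} (hv : v ∈ G.cthickening U n) :
    ∃ u ∈ U, ∃ p : G.Walk u v, p.IsPath ∧ p.length ≤ n :=
  let ⟨u, hu, p, hp⟩ := mem_cthickening.1 hv
  ⟨u, hu, p.bypass, p.bypass_isPath, p.length_bypass_le_length.trans hp⟩

theorem ncard_edgeBoundary_cthickening_le (n : ℕ) :
    (G.edgeBoundary (G.cthickening U (n + 1))).ncard ≤
      (#(G.cthickening U (n + 2)) - #(G.cthickening U n)) ^ 2 := by
  set R := G.cthickening U (n + 2) \ G.cthickening U n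
  have hsub : G.edgeBoundary (G.cthickening U (n + 1)) ⊆
      ((R ×ˢ R).image fun p : V × V => s(p.1, p.2) : Finset (Sym2 V)) := by
    rintro _ ⟨v, hv, w, hw, hvw, rfl⟩
    have hvR : v ∈ R := mem_sdiff.2
      ⟨cthickening_mono (by omega) hv, fun hv' => hw (mem_cthickening_succ_of_adj hv' hvw)⟩
    have hwR : w ∈ R := mem_sdiff.2
      ⟨mem_cthickening_succ_of_adj hv hvw, fun hw' => hw (cthickening_mono (by omega) hw')⟩
    exact mem_coe.2 (mem_image.2 ⟨(v, w), mem_product.2 ⟨hvR, hwR⟩, rfl⟩)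
  calc (G.edgeBoundary (G.cthickening U (n + 1))).ncard
      ≤ #((R ×ˢ R).image fun p : V × V => s(p.1, p.2)) := by
        rw [← Set.ncard_coe_finset]; exact Set.ncard_le_ncard hsub (finite_toSet _)
    _ ≤ #R ^ 2 := card_image_le.trans (by rw [card_product, sq])
    _ = _ := by rw [card_sdiff_of_subset (cthickening_mono (by omega))]

end SimpleGraph

theorem exists_lt_sub_le_div (f : ℕ → ℝ) {m : ℕ} (hm : m ≠ 0) :
    ∃ t < m, f (t + 1) - f t ≤ (f m - f 0) / m := by
  have hsum : ∑ t ∈ range m, (f (t + 1) - f t) ≤ ∑ _t ∈ range m, (f m - f 0) / m := by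
    rw [sum_range_sub, sum_const, card_range, nsmul_eq_mul,
      mul_div_cancel₀ _ (Nat.cast_ne_zero.2 hm)]
  obtain ⟨t, ht, hle⟩ := exists_le_of_sum_le (nonempty_range_iff.2 hm) hsum
  exact ⟨t, mem_range.1 ht, hle⟩

theorem short_path_between_large_sets_general (d ζ lam K : ℝ)
    (hlam0 : 0 < lam) (hlam1 : lam ≤ 1) (hK : 1 ≤ K) :
    ∀ (Vt : Type) [Fintype Vt] (G : SimpleGraph Vt),
      WellConnected G ζ lam d →
      ((Fintype.card Vt : ℝ) ≤ K * d) →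
      ∀ U W : Finset Vt, ζ * d ≤ (U.card : ℝ) → ζ * d ≤ (W.card : ℝ) →
        ∃ u ∈ U, ∃ w ∈ W, ∃ p : G.Walk u w, p.IsPath ∧ (p.length : ℝ) ≤ 8 * K / lam := by
  intro Vt _ G hG hcard U W hU hW
  have hd : 0 ≤ d := nonneg_of_mul_nonneg_right ((Nat.cast_nonneg _).trans hcard) (by linarith)
  set m := ⌈K / lam⌉₊
  have hKlam : 1 ≤ K / lam := (one_le_div hlam0).2 (hlam1.trans hK)
  have hm : K / lam ≤ m := Nat.le_ceil _
  obtain ⟨t, htm, hannulus⟩ := exists_lt_sub_le_div (m := m)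
    (fun t => (#(G.cthickening U (2 * t)) : ℝ)) (Nat.ceil_pos.2 (by linarith)).ne'
  have hannulus_le :
      ((#(G.cthickening U (2 * t + 2)) - #(G.cthickening U (2 * t)) : ℕ) : ℝ) ≤ lam * d := by
    have hball_le : (#(G.cthickening U (2 * m)) : ℝ) ≤ K * d :=
      le_trans (by exact_mod_cast card_le_univ _) hcard
    rw [Nat.cast_sub (card_le_card (cthickening_mono (by omega)))]
    calc _ ≤ ((#(G.cthickening U (2 * m)) : ℝ) - #(G.cthickening U (2 * 0))) / m := hannulus
      _ ≤ K * d / m := by gcongr; exact (sub_le_self _ (Nat.cast_nonneg _)).trans hball_le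
      _ ≤ lam * d := by
        rw [div_le_iff₀ (by linarith)]
        nlinarith [(div_le_iff₀ hlam0).1 hm]
  have hboundary : ((G.edgeBoundary (G.cthickening U (2 * t + 1))).ncard : ℝ) ≤ lam * d ^ 2 :=
    calc _ ≤ ((#(G.cthickening U (2 * t + 2)) - #(G.cthickening U (2 * t)) : ℕ) : ℝ) ^ 2 := by
          exact_mod_cast ncard_edgeBoundary_cthickening_le (2 * t)
      _ ≤ (lam * d) ^ 2 := by gcongr
      _ ≤ lam * d ^ 2 := by nlinarith
  obtain ⟨w, hwW, hw⟩ := hG.exists_mem_of_edgeBoundary (U := U) (W := W)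
    (by rwa [Set.ncard_coe_finset]) (by rwa [Set.ncard_coe_finset])
    (coe_subset.2 (subset_cthickening _)) hboundary
  obtain ⟨u, hu, p, hp, hlen⟩ := exists_isPath_of_mem_cthickening hw
  refine ⟨u, hu, w, hwW, p, hp, ?_⟩
  have hmlt : (m : ℝ) < K / lam + 1 := Nat.ceil_lt_add_one (by linarith)
  have htm' : (t : ℝ) + 1 ≤ m := by exact_mod_cast htm
  calc (p.length : ℝ) ≤ 2 * t + 1 := by exact_mod_cast hlen
    _ ≤ 4 * (K / lam) := by linarith
    _ ≤ 8 * K / lam := by rw [mul_div_assoc]; linarith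

/-- Lemma 5.3. A `(ζ,λ,d)`-connected graph on at most `K·d` vertices
contains, between any two vertex sets of size at least `ζ·d`, a path of length at most
`8K/λ`. -/
theorem short_path_between_large_sets (d ζ lam K : ℝ)
    (hd : 1 ≤ d) (hζ0 : 0 < ζ) (hζ1 : ζ ≤ 1) (hlam0 : 0 < lam) (hlam1 : lam ≤ 1) (hK : 1 ≤ K) :
    ∀ (Vt : Type) [Fintype Vt] (G : SimpleGraph Vt),
      WellConnected G ζ lam d →
      ((Fintype.card Vt : ℝ) ≤ K * d) →
      ∀ U W : Finset Vt, ζ * d ≤ (U.card : ℝ) → ζ * d ≤ (W.card : ℝ) →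
        ∃ u ∈ U, ∃ w ∈ W, ∃ p : G.Walk u w, p.IsPath ∧ (p.length : ℝ) ≤ 8 * K / lam :=
  short_path_between_large_sets_general d ζ lam K hlam0 hlam1 hK

end
end

section
/- Let d ≥ 1, let 0 < ζ, λ ≤ 1, and let K ≥ 1. Let G be a (ζ,λ,d)-connected graph with at most K·d vertices, and let U, V ⊆ V(G) be sets each of size at least ζ·d. Then G contains at least λ²d²/(32K) pairwise edge-disjoint paths from U to V, each of length at most 16K/λ. -/
open SimpleGraph Finset
open scoped Classical symmDiff

noncomputable section

/-!
Choose paths from `U` to `W` of length at most `n = ⌊16K/λ⌋` greedily, each avoiding the edges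
of the earlier ones; as long as fewer than `λ²d²/(32K)` paths are chosen, they use at most
`λd²/2` edges `F`. A further path always exists: otherwise `W` misses the ball of radius `n`
around `U` in `G - F`. The `n ≥ 8K/λ` layers of that ball share at most `Kd` vertices, so two
consecutive ones have at most `2Kd/n ≤ λd/4` vertices in total, hence at most `(λd/8)²` edges
between them. Deleting these edges together with `F` cuts the ball off from the rest of `G`, while
fewer than `λd²` edges are deleted, contradicting `(ζ,λ,d)`-connectivity.
-/

open Function

theorem Finset.sum_card_le_card_of_pairwise_disjoint {V ι : Type*} [Fintype V]
    {f : ι → Finset V} (hf : Pairwise (Disjoint on f)) (s : Finset ι) :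
    ∑ i ∈ s, #(f i) ≤ Fintype.card V := by
  rw [← card_biUnion (hf.set_pairwise s)]
  exact card_le_univ _

namespace SimpleGraph

variable {V : Type*} [Fintype V] (H : SimpleGraph V) (U : Finset V)

def reachWithin (i : ℕ) : Finset V :=
  univ.filter fun v => ∃ u ∈ U, ∃ p : H.Walk u v, p.length ≤ i

/-- The vertices at distance exactly `i + 1` from `U`. -/
def layer (i : ℕ) : Finset V :=
  H.reachWithin U (i + 1) \ H.reachWithin U i

variable {H U}

theorem mem_reachWithin {i : ℕ} {v : V} :
    v ∈ H.reachWithin U i ↔ ∃ u ∈ U, ∃ p : H.Walk u v, p.length ≤ i := by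
  simp [reachWithin]

theorem reachWithin_mono {i j : ℕ} (hij : i ≤ j) : H.reachWithin U i ⊆ H.reachWithin U j := by
  intro v hv
  obtain ⟨u, hu, p, hp⟩ := mem_reachWithin.1 hv
  exact mem_reachWithin.2 ⟨u, hu, p, hp.trans hij⟩

theorem subset_reachWithin (i : ℕ) : U ⊆ H.reachWithin U i :=
  fun u hu => mem_reachWithin.2 ⟨u, hu, .nil, Nat.zero_le i⟩

theorem mem_reachWithin_succ_of_adj {i : ℕ} {v w : V} (hv : v ∈ H.reachWithin U i)
    (hvw : H.Adj v w) : w ∈ H.reachWithin U (i + 1) := by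
  obtain ⟨u, hu, p, hp⟩ := mem_reachWithin.1 hv
  exact mem_reachWithin.2 ⟨u, hu, p.concat hvw, by rw [Walk.length_concat]; omega⟩

variable (H U) in
theorem pairwise_disjoint_layer : Pairwise (Disjoint on H.layer U) := by
  have hlt : ∀ i j, i < j → Disjoint (H.layer U i) (H.layer U j) := fun i j hij =>
    Finset.disjoint_left.2 fun _ hvi hvj =>
      (mem_sdiff.1 hvj).2 (reachWithin_mono hij (mem_sdiff.1 hvi).1)
  intro i j hij
  rcases Nat.lt_or_gt_of_ne hij with h | h
  exacts [hlt i j h, (hlt j i h).symm]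

theorem mem_layer_of_adj {i : ℕ} {v w : V} (hv : v ∈ H.reachWithin U (i + 1))
    (hw : w ∉ H.reachWithin U (i + 1)) (hvw : H.Adj v w) :
    v ∈ H.layer U i ∧ w ∈ H.layer U (i + 1) :=
  ⟨mem_sdiff.2 ⟨hv, fun hvi => hw (mem_reachWithin_succ_of_adj hvi hvw)⟩,
    mem_sdiff.2 ⟨mem_reachWithin_succ_of_adj hv hvw, hw⟩⟩

omit [Fintype V] in
theorem Walk.mem_of_adj_closed {S : Set V} (hS : ∀ v w, H.Adj v w → v ∈ S → w ∈ S)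
    {v w : V} (p : H.Walk v w) (hv : v ∈ S) : w ∈ S := by
  induction p with
  | nil => exact hv
  | cons hadj _ ih => exact ih (hS _ _ hadj hv)

variable (H U) in
theorem exists_layer_card_add_card_le {n : ℕ} (hn : 0 < n) :
    ∃ i < n, (#(H.layer U i) + #(H.layer U (i + 1)) : ℝ) ≤ 2 * Fintype.card V / n := by
  have hsum : ∑ i ∈ range n, (#(H.layer U i) + #(H.layer U (i + 1)) : ℝ) ≤
      ∑ _i ∈ range n, (2 * Fintype.card V / n : ℝ) := by
    rw [sum_const, card_range, nsmul_eq_mul, mul_div_cancel₀ _ (by positivity), sum_add_distrib]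
    have hcur := sum_card_le_card_of_pairwise_disjoint (H.pairwise_disjoint_layer U) (range n)
    have hnext := sum_card_le_card_of_pairwise_disjoint
      ((H.pairwise_disjoint_layer U).comp_of_injective Nat.succ_injective) (range n)
    rw [two_mul]
    exact_mod_cast add_le_add hcur hnext
  obtain ⟨i, hi, h⟩ := exists_le_of_sum_le (nonempty_range_iff.2 hn.ne') hsum
  exact ⟨i, mem_range.1 hi, h⟩

omit [Fintype V] in
theorem card_interedges_le_sq_half_add [DecidableRel H.Adj] (s t : Finset V) :
    (#(H.interedges s t) : ℝ) ≤ ((#s + #t) / 2) ^ 2 :=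
  calc (#(H.interedges s t) : ℝ) ≤ #s * #t := by exact_mod_cast H.card_interedges_le_mul s t
    _ ≤ ((#s + #t) / 2) ^ 2 := by nlinarith [four_mul_le_sq_add (#s : ℝ) #t]

end SimpleGraph

namespace GraphPath

variable {V : Type} {G : SimpleGraph V}

theorem card_edgeFinset_le_length (P : GraphPath G) : #P.edgeFinset ≤ P.walk.length :=
  P.walk.length_edges ▸ List.toFinset_card_le _

theorem coe_edgeFinset_subset_edgeSet (P : GraphPath G) :
    (P.edgeFinset : Set (Sym2 V)) ⊆ G.edgeSet := fun _ he =>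
  P.walk.edges_subset_edgeSet (List.mem_toFinset.1 he)

def ofDeleteEdges {F : Set (Sym2 V)} {a b : V} {p : (G.deleteEdges F).Walk a b}
    (hp : p.IsPath) : GraphPath G :=
  ⟨a, b, p.mapLe (G.deleteEdges_le F), hp.mapLe _⟩

theorem length_ofDeleteEdges {F : Set (Sym2 V)} {a b : V} {p : (G.deleteEdges F).Walk a b}
    (hp : p.IsPath) : (ofDeleteEdges hp).walk.length = p.length :=
  Walk.length_mapLe _ _

theorem disjoint_edgeFinset_ofDeleteEdges {F : Finset (Sym2 V)} {a b : V}
    {p : (G.deleteEdges (F : Set (Sym2 V))).Walk a b} (hp : p.IsPath) :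
    Disjoint (ofDeleteEdges hp).edgeFinset F := by
  refine Finset.disjoint_left.2 fun e he heF => ?_
  have hp' : e ∈ p.edges := by
    simpa [edgeFinset, ofDeleteEdges, Walk.edges_mapLe_eq_edges] using he
  exact (edgeSet_deleteEdges (F : Set (Sym2 V)) ▸ p.edges_subset_edgeSet hp').2 heF

end GraphPath

section PathLists

variable {V : Type} {G : SimpleGraph V}

theorem edgeFinset_subset_pathListEdges {l : List (GraphPath G)} {P : GraphPath G}
    (hP : P ∈ l) : P.edgeFinset ⊆ pathListEdges l := by
  induction l with
  | nil => simp at hP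
  | cons Q l ih =>
    rcases List.mem_cons.1 hP with rfl | hP
    · exact subset_union_left
    · exact (ih hP).trans subset_union_right

theorem coe_pathListEdges_subset_edgeSet (l : List (GraphPath G)) :
    (pathListEdges l : Set (Sym2 V)) ⊆ G.edgeSet := by
  induction l with
  | nil => simp [pathListEdges]
  | cons P l ih =>
    simp only [pathListEdges, List.foldr_cons, coe_union, Set.union_subset_iff]
    exact ⟨P.coe_edgeFinset_subset_edgeSet, ih⟩

theorem card_pathListEdges_le {l : List (GraphPath G)} {n : ℕ}
    (hl : ∀ P ∈ l, P.walk.length ≤ n) : #(pathListEdges l) ≤ l.length * n := by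
  induction l with
  | nil => simp [pathListEdges]
  | cons P l ih =>
    have hP := P.card_edgeFinset_le_length.trans (hl P List.mem_cons_self)
    have hrest := ih fun Q hQ => hl Q (List.mem_cons_of_mem P hQ)
    calc #(P.edgeFinset ∪ pathListEdges l) ≤ #P.edgeFinset + #(pathListEdges l) :=
          card_union_le _ _
      _ ≤ (l.length + 1) * n := by rw [add_mul, one_mul, add_comm]; exact add_le_add hrest hP

theorem EdgeDisjointPaths.cons {l : List (GraphPath G)} (hl : EdgeDisjointPaths l)
    {P : GraphPath G} (hP : Disjoint P.edgeFinset (pathListEdges l)) :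
    EdgeDisjointPaths (P :: l) :=
  List.Pairwise.cons (fun _ hQ => hP.mono_right (edgeFinset_subset_pathListEdges hQ)) hl

theorem exists_edgeDisjointPaths_of_forall_avoiding (Q : GraphPath G → Prop) (n : ℕ) {c : ℝ}
    (h : ∀ F : Finset (Sym2 V), (F : Set (Sym2 V)) ⊆ G.edgeSet → (#F : ℝ) ≤ c →
      ∃ P : GraphPath G, Q P ∧ P.walk.length ≤ n ∧ Disjoint P.edgeFinset F)
    (N : ℕ) (hN : (N * n : ℝ) ≤ c) :
    ∃ l : List (GraphPath G), l.length = N + 1 ∧ EdgeDisjointPaths l ∧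
      ∀ P ∈ l, Q P ∧ P.walk.length ≤ n := by
  have extend : ∀ l : List (GraphPath G), EdgeDisjointPaths l →
      (∀ P ∈ l, Q P ∧ P.walk.length ≤ n) → (l.length * n : ℝ) ≤ c →
      ∃ P : GraphPath G, EdgeDisjointPaths (P :: l) ∧ ∀ R ∈ P :: l, Q R ∧ R.walk.length ≤ n := by
    intro l hdisj hl hlc
    have hcard : (#(pathListEdges l) : ℝ) ≤ c :=
      le_trans (by exact_mod_cast card_pathListEdges_le fun P hP => (hl P hP).2) hlc
    obtain ⟨P, hQ, hlen, hP⟩ := h _ (coe_pathListEdges_subset_edgeSet l) hcard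
    exact ⟨P, hdisj.cons hP, List.forall_mem_cons.2 ⟨⟨hQ, hlen⟩, hl⟩⟩
  induction N with
  | zero =>
    obtain ⟨P, hdisj, hP⟩ := extend [] List.Pairwise.nil (by simp) (by simpa using hN)
    exact ⟨[P], rfl, hdisj, hP⟩
  | succ N ih =>
    obtain ⟨l, hlen, hdisj, hl⟩ := ih (le_trans (by gcongr; simp) hN)
    obtain ⟨P, hdisj', hP⟩ := extend l hdisj hl (by rw [hlen]; exact_mod_cast hN)
    exact ⟨P :: l, by simp [hlen], hdisj', hP⟩

end PathLists

theorem WellConnected.exists_short_path_avoiding {V : Type} [Fintype V] {G : SimpleGraph V}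
    {ζ lam d : ℝ} (hG : WellConnected G ζ lam d) {U W : Finset V} (hU : ζ * d ≤ #U)
    (hW : ζ * d ≤ #W) {n : ℕ} (hn : 0 < n) {F : Finset (Sym2 V)}
    (hF : (F : Set (Sym2 V)) ⊆ G.edgeSet)
    (hFcard : #F + (Fintype.card V / n : ℝ) ^ 2 ≤ lam * d ^ 2) :
    ∃ P : GraphPath G, (P.a ∈ U ∧ P.b ∈ W) ∧ P.walk.length ≤ n ∧ Disjoint P.edgeFinset F := by
  set H := G.deleteEdges (F : Set (Sym2 V))
  by_contra hnone
  have hfar : ∀ w ∈ W, w ∉ H.reachWithin U n := by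
    intro w hw hwn
    obtain ⟨u, hu, p, hp⟩ := mem_reachWithin.1 hwn
    exact hnone ⟨.ofDeleteEdges p.bypass_isPath, ⟨hu, hw⟩,
      (GraphPath.length_ofDeleteEdges _).trans_le (p.length_bypass_le_length.trans hp),
      GraphPath.disjoint_edgeFinset_ofDeleteEdges _⟩
  obtain ⟨i, hi, hthin⟩ := H.exists_layer_card_add_card_le U hn
  set C := (G.interedges (H.layer U i) (H.layer U (i + 1))).image fun e => s(e.1, e.2)
  have hC : (C : Set (Sym2 V)) ⊆ G.edgeSet := by
    intro e he
    obtain ⟨⟨v, w⟩, hvw, rfl⟩ := mem_image.1 (mem_coe.1 he)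
    exact ((G.mem_interedges_iff).1 hvw).2.2
  have hCcard : (#C : ℝ) ≤ (Fintype.card V / n : ℝ) ^ 2 := by
    rw [mul_div_assoc] at hthin
    calc (#C : ℝ) ≤ #(G.interedges (H.layer U i) (H.layer U (i + 1))) := by
          exact_mod_cast card_image_le
      _ ≤ ((#(H.layer U i) + #(H.layer U (i + 1))) / 2) ^ 2 := G.card_interedges_le_sq_half_add _ _
      _ ≤ (Fintype.card V / n : ℝ) ^ 2 := pow_le_pow_left₀ (by positivity) (by linarith) 2
  have hFC : (#(F ∪ C) : ℝ) ≤ lam * d ^ 2 :=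
    calc (#(F ∪ C) : ℝ) ≤ #F + #C := by exact_mod_cast card_union_le F C
      _ ≤ lam * d ^ 2 := by linarith
  obtain ⟨x, hx, y, hy, p, -⟩ := hG U W (by simpa using hU) (by simpa using hW)
    ↑(F ∪ C) (by rw [coe_union]; exact Set.union_subset hF hC) (by rwa [Set.ncard_coe_finset])
  have hclosed : ∀ v w, (G.deleteEdges ↑(F ∪ C)).Adj v w →
      v ∈ H.reachWithin U (i + 1) → w ∈ H.reachWithin U (i + 1) := by
    intro v w hvw hv
    by_contra hw
    obtain ⟨hGvw, hvwFC⟩ := deleteEdges_adj.1 hvw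
    simp only [coe_union, Set.mem_union, mem_coe, not_or] at hvwFC
    obtain ⟨hvi, hwi⟩ := mem_layer_of_adj hv hw (deleteEdges_adj.2 ⟨hGvw, hvwFC.1⟩)
    exact hvwFC.2 (mem_image.2 ⟨(v, w), G.mk_mem_interedges_iff.2 ⟨hvi, hwi, hGvw⟩, rfl⟩)
  exact hfar y hy (reachWithin_mono hi (p.mem_of_adj_closed hclosed (subset_reachWithin _ hx)))

theorem le_floor_two_mul {x : ℝ} (hx : 1 ≤ x) : x ≤ ⌊2 * x⌋₊ := by
  linarith [Nat.lt_floor_add_one (2 * x)]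

theorem many_short_edge_disjoint_paths_between_large_sets_general (d ζ lam K : ℝ)
    (hd : 1 ≤ d) (hlam0 : 0 < lam) (hlam1 : lam ≤ 1) (hK : 1 ≤ K) :
    ∀ (Vt : Type) [Fintype Vt] (G : SimpleGraph Vt),
      WellConnected G ζ lam d →
      ((Fintype.card Vt : ℝ) ≤ K * d) →
      ∀ U W : Finset Vt, ζ * d ≤ (U.card : ℝ) → ζ * d ≤ (W.card : ℝ) →
        ∃ l : List (GraphPath G),
          EdgeDisjointPaths l ∧
          (lam ^ 2 * d ^ 2 / (32 * K) ≤ (l.length : ℝ)) ∧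
          (∀ P ∈ l,
            ((P.a ∈ U ∧ P.b ∈ W) ∨ (P.a ∈ W ∧ P.b ∈ U)) ∧
            (P.walk.length : ℝ) ≤ 16 * K / lam) := by
  intro Vt _ G hG hcard U W hU hW
  set n := ⌊16 * K / lam⌋₊
  have hn8 : 8 * K / lam ≤ n := by
    have h8 : 1 ≤ 8 * K / lam := by rw [le_div_iff₀ hlam0]; linarith
    have h16 : 2 * (8 * K / lam) = 16 * K / lam := by ring
    simpa only [h16] using le_floor_two_mul h8
  have hn : 0 < n := by exact_mod_cast (show (0 : ℝ) < 8 * K / lam by positivity).trans_le hn8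
  have hcut : (Fintype.card Vt / n : ℝ) ^ 2 ≤ lam * d ^ 2 / 2 := by
    have hratio : (Fintype.card Vt / n : ℝ) ≤ lam * d / 8 := by
      rw [div_le_iff₀ (by positivity)]
      calc (Fintype.card Vt : ℝ) ≤ K * d := hcard
        _ = lam * d / 8 * (8 * K / lam) := by field_simp
        _ ≤ lam * d / 8 * n := by gcongr
    nlinarith [pow_le_pow_left₀ (by positivity) hratio 2]
  have hbudget : (⌊lam ^ 2 * d ^ 2 / (32 * K)⌋₊ * n : ℝ) ≤ lam * d ^ 2 / 2 :=
    calc _ ≤ lam ^ 2 * d ^ 2 / (32 * K) * (16 * K / lam) := by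
          gcongr <;> exact Nat.floor_le (by positivity)
      _ = lam * d ^ 2 / 2 := by field_simp; ring
  obtain ⟨l, hlen, hdisj, hl⟩ := exists_edgeDisjointPaths_of_forall_avoiding
    (fun P => P.a ∈ U ∧ P.b ∈ W) n
    (fun F hF hFc => hG.exists_short_path_avoiding hU hW hn hF (by linarith)) _ hbudget
  refine ⟨l, hdisj, ?_, fun P hP => ⟨Or.inl (hl P hP).1, ?_⟩⟩
  · rw [hlen, Nat.cast_succ]
    exact (Nat.lt_floor_add_one _).le
  · exact (Nat.cast_le.2 (hl P hP).2).trans (Nat.floor_le (by positivity))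

/-- Corollary 5.4. A `(ζ,λ,d)`-connected graph on at most `K·d` vertices
contains, between any two vertex sets of size at least `ζ·d`, at least `λ²d²/(32K)` pairwise
edge-disjoint paths, each of length at most `16K/λ`. -/
theorem many_short_edge_disjoint_paths_between_large_sets (d ζ lam K : ℝ)
    (hd : 1 ≤ d) (hζ0 : 0 < ζ) (hζ1 : ζ ≤ 1) (hlam0 : 0 < lam) (hlam1 : lam ≤ 1) (hK : 1 ≤ K) :
    ∀ (Vt : Type) [Fintype Vt] (G : SimpleGraph Vt),
      WellConnected G ζ lam d →
      ((Fintype.card Vt : ℝ) ≤ K * d) →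
      ∀ U W : Finset Vt, ζ * d ≤ (U.card : ℝ) → ζ * d ≤ (W.card : ℝ) →
        ∃ l : List (GraphPath G),
          EdgeDisjointPaths l ∧
          (lam ^ 2 * d ^ 2 / (32 * K) ≤ (l.length : ℝ)) ∧
          (∀ P ∈ l,
            ((P.a ∈ U ∧ P.b ∈ W) ∨ (P.a ∈ W ∧ P.b ∈ U)) ∧
            (P.walk.length : ℝ) ≤ 16 * K / lam) :=
  many_short_edge_disjoint_paths_between_large_sets_general d ζ lam K hd hlam0 hlam1 hK

end
end
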